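/- arXiv:math/0612099 — 2 statements merged into one kernel-verified Lean document; each statement's English description precedes it below -/
import Mathlib

section
/- Let λ : ℕ → ℂ and let 0 ≤ s ≤ r satisfy Σ_{i=s}^{r} λ_i = 0. Then the following are equivalent: (a) for every decomposition α_{[s,r]} = β^{(1)} + … + β^{(n)} with n ≥ 2 in which each β^{(k)} is an interval vector, there exists some k with λ·β^{(k)} ≠ 0; (b) for every m with s < m ≤ r, one has Σ_{i=m}^{r} λ_i ≠ 0. -/
/-- The interval vector `α_{[s,r]} : ℕ → ℕ`, taking value 1 on `s ≤ i ≤ r`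
and 0 elsewhere. -/
def intervalVec (s r : ℕ) : ℕ → ℕ := fun i => if s ≤ i ∧ i ≤ r then 1 else 0

lemma finsum_intervalVec (lam : ℕ → ℂ) (a b : ℕ) :
    (∑ᶠ i, lam i * (intervalVec a b i : ℂ)) = ∑ i ∈ Finset.Icc a b, lam i := by
  rw [finsum_eq_finset_sum_of_support_subset _ (s := Finset.Icc a b)]
  · apply Finset.sum_congr rfl
    intro i hi
    rw [Finset.mem_Icc] at hi
    simp [intervalVec, hi]
  · intro i hi
    simp only [Function.mem_support] at hi
    by_contra h
    simp only [Finset.coe_Icc, Set.mem_Icc] at h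
    apply hi
    simp [intervalVec, h]

/-- For a weight `lam : ℕ → ℂ` with `Σ_{i=s}^r lam i = 0`, the
Crawley-Boevey simplicity criterion for `α_{[s,r]}` is equivalent to Khare's
condition `Σ_{i=m}^r lam i ≠ 0` for all `s < m ≤ r`. -/
theorem simplicity_criterion_iff_khare (lam : ℕ → ℂ) (s r : ℕ) (hsr : s ≤ r)
    (hzero : ∑ i ∈ Finset.Icc s r, lam i = 0) :
    (∀ n : ℕ, 2 ≤ n → ∀ β : Fin n → ℕ → ℕ,
        (∀ k, ∃ sk rk : ℕ, sk ≤ rk ∧ β k = intervalVec sk rk) →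
        (∀ i, (∑ k, β k i) = intervalVec s r i) →
        ∃ k, (∑ᶠ i, lam i * (β k i : ℂ)) ≠ 0) ↔
    (∀ m : ℕ, s < m → m ≤ r → ∑ i ∈ Finset.Icc m r, lam i ≠ 0) := by
  constructor
  · intro ha m hm hmr hz
    have hsplit : ∑ i ∈ Finset.Icc s (m-1), lam i = 0 := by
      have hset : Finset.Icc s r = Finset.Icc s (m-1) ∪ Finset.Icc m r := by
        ext i; simp only [Finset.mem_Icc, Finset.mem_union]; omega
      have hd : Disjoint (Finset.Icc s (m-1)) (Finset.Icc m r) := by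
        rw [Finset.disjoint_left]
        intro i h1 h2
        rw [Finset.mem_Icc] at h1 h2
        omega
      rw [hset, Finset.sum_union hd, hz, add_zero] at hzero
      exact hzero
    obtain ⟨k, hk⟩ := ha 2 le_rfl ![intervalVec s (m-1), intervalVec m r]
      (by
        intro k
        fin_cases k
        · exact ⟨s, m-1, by omega, rfl⟩
        · exact ⟨m, r, by omega, rfl⟩)
      (by
        intro i
        simp only [Fin.sum_univ_two, Matrix.cons_val_zero, Matrix.cons_val_one,
          Matrix.head_cons, intervalVec]
        split_ifs <;> omega)
    fin_cases k
    · exact hk ((finsum_intervalVec lam s (m-1)).trans hsplit)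
    · exact hk ((finsum_intervalVec lam m r).trans hz)
  · intro hb n hn β hint hsum
    by_contra h
    push_neg at h
    have hr : (∑ k, β k r) = 1 := by
      have := hsum r
      simpa [intervalVec, hsr] using this
    obtain ⟨k, hk⟩ : ∃ k, β k r ≠ 0 := by
      by_contra hc; push_neg at hc; simp [hc] at hr
    obtain ⟨sk, rk, hskrk, hβk⟩ := hint k
    have hks : sk ≤ r ∧ r ≤ rk := by
      rw [hβk] at hk
      simp only [intervalVec] at hk
      by_contra hc
      rw [if_neg hc] at hk
      exact hk rfl
    have hrk : rk = r := by
      by_contra hne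
      have hgt : r < rk := by omega
      have h1 := hsum rk
      have h0 : intervalVec s r rk = 0 := by simp only [intervalVec]; rw [if_neg]; omega
      rw [h0] at h1
      have hz : β k rk = 0 :=
        (Finset.sum_eq_zero_iff.mp h1) k (Finset.mem_univ k)
      rw [hβk] at hz
      simp only [intervalVec] at hz
      rw [if_pos ⟨by omega, le_rfl⟩] at hz
      omega
    have hsk : s < sk := by
      by_contra hle
      push_neg at hle
      have : Nontrivial (Fin n) := Fin.nontrivial_iff_two_le.mpr hn
      obtain ⟨k', hk'⟩ := exists_ne k
      obtain ⟨s', r', hs'r', hβk'⟩ := hint k'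
      have hk's' : β k' s' = 1 := by
        rw [hβk']; simp only [intervalVec]; rw [if_pos ⟨le_rfl, hs'r'⟩]
      have h1 := hsum s'
      by_cases hc : s ≤ s' ∧ s' ≤ r
      · have hks' : β k s' = 1 := by
          rw [hβk]; simp only [intervalVec]; rw [if_pos ⟨by omega, by omega⟩]
        have hle2 : β k s' + β k' s' ≤ ∑ j, β j s' := by
          calc β k s' + β k' s' = ∑ j ∈ ({k, k'} : Finset (Fin n)), β j s' := by
                rw [Finset.sum_pair (Ne.symm hk')]
            _ ≤ ∑ j, β j s' :=
                Finset.sum_le_sum_of_subset (Finset.subset_univ _)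
        have h2 : intervalVec s r s' = 1 := by
          simp only [intervalVec]; rw [if_pos hc]
        rw [h2] at h1
        omega
      · have h2 : intervalVec s r s' = 0 := by
          simp only [intervalVec]; rw [if_neg hc]
        rw [h2] at h1
        have := (Finset.sum_eq_zero_iff.mp h1) k' (Finset.mem_univ k')
        omega
    apply hb sk hsk hks.1
    have := h k
    rw [hβk, hrk, finsum_intervalVec] at this
    exact this
end

section
/- Invertibility of deformed Jucys–Murphy elements: for λ, ν ∈ ℂ and an integer n ≥ 1, the following are equivalent: (i) for every r with 1 ≤ r ≤ n, both λ·1 + ν·X_r and λ·1 − ν·X_r are invertible in the complex group algebra ℂ[S_r], where X_r = Σ_{m=2}^{r} σ_{1m} is the sum of the transpositions exchanging 1 and m (and X_1 = 0); (ii) for every integer p with 0 ≤ p ≤ n − 1, λ + pν ≠ 0 and λ − pν ≠ 0. -/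
open MonoidAlgebra Equiv Finset
namespace JMaux
variable {N : ℕ}

noncomputable def tr (a b : Fin N) : MonoidAlgebra ℂ (Equiv.Perm (Fin N)) :=
  MonoidAlgebra.of ℂ (Equiv.Perm (Fin N)) (Equiv.swap a b)

noncomputable def J (l : Fin N) : MonoidAlgebra ℂ (Equiv.Perm (Fin N)) :=
  ∑ i ∈ Finset.univ.filter (fun i => i < l), tr i l

lemma tr_mul_self (a b : Fin N) : tr a b * tr a b = 1 := by
  rw [tr, ← map_mul, Equiv.swap_mul_self, map_one]

lemma tr_comm_disj (a b c d : Fin N) (h1 : a ≠ c) (h2 : a ≠ d) (h3 : b ≠ c) (h4 : b ≠ d) :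
    tr a b * tr c d = tr c d * tr a b := by
  rw [tr, tr, ← map_mul, ← map_mul]
  congr 1
  have : Equiv.Perm.Disjoint (Equiv.swap a b) (Equiv.swap c d) := by
    intro x
    by_cases hx : x = a ∨ x = b
    · right
      rcases hx with rfl | rfl
      · exact Equiv.swap_apply_of_ne_of_ne h1 h2
      · exact Equiv.swap_apply_of_ne_of_ne h3 h4
    · left
      push_neg at hx
      exact Equiv.swap_apply_of_ne_of_ne hx.1 hx.2
  exact this.commute

-- J i commutes with tr p l when i < p < l
lemma J_comm_tr (i p l : Fin N) (hip : i < p) (hpl : p < l) :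
    J i * tr p l = tr p l * J i := by
  rw [J, Finset.sum_mul, Finset.mul_sum]
  apply Finset.sum_congr rfl
  intro c hc
  simp only [Finset.mem_filter, Finset.mem_univ, true_and] at hc
  have h1 : c ≠ p := ne_of_lt (lt_trans hc hip)
  have h2 : c ≠ l := ne_of_lt (lt_trans (lt_trans hc hip) hpl)
  have h3 : i ≠ p := ne_of_lt hip
  have h4 : i ≠ l := ne_of_lt (lt_trans hip hpl)
  exact tr_comm_disj c i p l h1 h2 h3 h4

lemma sJl (p l : Fin N) (hpl : (l : ℕ) = (p : ℕ) + 1) :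
    tr p l * J l = J p * tr p l + 1 := by
  have hfil : Finset.univ.filter (fun i => i < l) =
      insert p (Finset.univ.filter (fun i : Fin N => i < p)) := by
    ext i
    simp only [Finset.mem_insert, Finset.mem_filter, Finset.mem_univ, true_and, Fin.lt_def]
    omega
  have hpnot : p ∉ Finset.univ.filter (fun i : Fin N => i < p) := by simp
  rw [J, hfil, Finset.sum_insert hpnot, mul_add, tr_mul_self, Finset.mul_sum, J, Finset.sum_mul]
  rw [add_comm]
  congr 1
  apply Finset.sum_congr rfl
  intro i hi
  simp only [Finset.mem_filter, Fin.lt_def] at hi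
  have hip : i ≠ p := by intro h; subst h; omega
  have hil : i ≠ l := by intro h; subst h; omega
  simp only [tr]
  rw [← map_mul, ← map_mul]
  congr 1
  have := Equiv.swap_apply_apply (Equiv.swap p l) i l
  rw [Equiv.swap_apply_of_ne_of_ne hip hil, Equiv.swap_apply_right] at this
  rw [this]
  rw [Equiv.swap_inv]
  simp [Equiv.swap_mul_self]

lemma tr_mul_J_comm (a k l : Fin N) (hak : a < k) (hkl : k < l) :
    tr a k * J l = J l * tr a k := by
  rw [J, Finset.mul_sum, Finset.sum_mul]
  refine Finset.sum_nbij' (i := fun c => Equiv.swap a k c) (j := fun c => Equiv.swap a k c)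
    ?_ ?_ ?_ ?_ ?_
  · intro c hc
    simp only [Finset.mem_filter, Finset.mem_univ, true_and] at hc ⊢
    rcases eq_or_ne c a with rfl | hca
    · rw [Equiv.swap_apply_left]; exact hkl
    rcases eq_or_ne c k with rfl | hck
    · rw [Equiv.swap_apply_right]; exact lt_trans hak hkl
    · rw [Equiv.swap_apply_of_ne_of_ne hca hck]; exact hc
  · intro c hc
    simp only [Finset.mem_filter, Finset.mem_univ, true_and] at hc ⊢
    rcases eq_or_ne c a with rfl | hca
    · rw [Equiv.swap_apply_left]; exact hkl
    rcases eq_or_ne c k with rfl | hck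
    · rw [Equiv.swap_apply_right]; exact lt_trans hak hkl
    · rw [Equiv.swap_apply_of_ne_of_ne hca hck]; exact hc
  · intro c _; simp
  · intro c _; simp
  · intro c hc
    simp only [Finset.mem_filter, Finset.mem_univ, true_and] at hc
    have hal : a ≠ l := ne_of_lt (lt_trans hak hkl)
    have hkl' : k ≠ l := ne_of_lt hkl
    rw [tr, tr, tr, ← map_mul, ← map_mul]
    congr 1
    have key := Equiv.swap_apply_apply (Equiv.swap a k) c l
    rw [Equiv.swap_apply_of_ne_of_ne (Ne.symm hal) (Ne.symm hkl')] at key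
    rw [key, Equiv.swap_inv]
    simp [Equiv.swap_mul_self, mul_assoc]

lemma J_comm (k l : Fin N) : J k * J l = J l * J k := by
  have main : ∀ k l : Fin N, k < l → J k * J l = J l * J k := by
    intro k l h
    calc J k * J l = ∑ a ∈ Finset.univ.filter (fun i => i < k), tr a k * J l := by
          rw [J, Finset.sum_mul]
      _ = ∑ a ∈ Finset.univ.filter (fun i => i < k), J l * tr a k := by
          apply Finset.sum_congr rfl
          intro a ha
          simp only [Finset.mem_filter, Finset.mem_univ, true_and] at ha
          exact tr_mul_J_comm a k l ha h
      _ = J l * ∑ a ∈ Finset.univ.filter (fun i => i < k), tr a k := (Finset.mul_sum _ _ _).symm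
      _ = J l * J k := rfl
  rcases lt_trichotomy k l with h | rfl | h
  · exact main k l h
  · rfl
  · exact (main l k h).symm
noncomputable def inn (x y : MonoidAlgebra ℂ (Equiv.Perm (Fin N))) : ℂ :=
  ∑ g : Equiv.Perm (Fin N), (starRingEnd ℂ) (x.coeff g) * y.coeff g

lemma inn_self_ne_zero (v : MonoidAlgebra ℂ (Equiv.Perm (Fin N))) (hv : v ≠ 0) :
    inn v v ≠ 0 := by
  have : inn v v = ((∑ g : Equiv.Perm (Fin N), Complex.normSq (v.coeff g) : ℝ) : ℂ) := by
    rw [inn]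
    push_cast
    apply Finset.sum_congr rfl
    intro g _
    rw [Complex.normSq_eq_conj_mul_self]
  rw [this]
  norm_cast
  obtain ⟨g, hg⟩ : ∃ g, v.coeff g ≠ 0 := by
    by_contra h
    push_neg at h
    exact hv (MonoidAlgebra.coeff_injective (Finsupp.ext h))
  have hpos : 0 < ∑ g : Equiv.Perm (Fin N), Complex.normSq (v.coeff g) := by
    apply Finset.sum_pos' (fun i _ => Complex.normSq_nonneg _)
    exact ⟨g, Finset.mem_univ g, Complex.normSq_pos.mpr hg⟩
  exact ne_of_gt hpos

lemma inn_sub_left (x y z : MonoidAlgebra ℂ (Equiv.Perm (Fin N))) :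
    inn (x - y) z = inn x z - inn y z := by
  rw [inn, inn, inn, ← Finset.sum_sub_distrib]
  apply Finset.sum_congr rfl
  intro g _
  rw [MonoidAlgebra.coeff_sub, Finsupp.sub_apply, map_sub, sub_mul]

lemma inn_smul_left (c : ℂ) (x y : MonoidAlgebra ℂ (Equiv.Perm (Fin N))) :
    inn (c • x) y = (starRingEnd ℂ) c * inn x y := by
  rw [inn, inn, Finset.mul_sum]
  apply Finset.sum_congr rfl
  intro g _
  rw [MonoidAlgebra.coeff_smul_apply, smul_eq_mul, map_mul, mul_assoc]

lemma inn_smul_right (c : ℂ) (x y : MonoidAlgebra ℂ (Equiv.Perm (Fin N))) :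
    inn x (c • y) = c * inn x y := by
  rw [inn, inn, Finset.mul_sum]
  apply Finset.sum_congr rfl
  intro g _
  rw [MonoidAlgebra.coeff_smul_apply, smul_eq_mul]
  ring

lemma tr_mul_apply (a b : Fin N) (x : MonoidAlgebra ℂ (Equiv.Perm (Fin N)))
    (g : Equiv.Perm (Fin N)) : (tr a b * x).coeff g = x.coeff (Equiv.swap a b * g) := by
  rw [tr, MonoidAlgebra.of_apply, MonoidAlgebra.coeff_single_mul_apply, one_mul, Equiv.swap_inv]

lemma inn_tr (a b : Fin N) (x y : MonoidAlgebra ℂ (Equiv.Perm (Fin N))) :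
    inn (tr a b * x) y = inn x (tr a b * y) := by
  rw [inn, inn]
  apply Fintype.sum_equiv (Equiv.mulLeft (Equiv.swap a b))
  intro g
  rw [tr_mul_apply, tr_mul_apply]
  simp only [Equiv.coe_mulLeft]
  rw [← mul_assoc, Equiv.swap_mul_self, one_mul]

lemma inn_J (l : Fin N) (x y : MonoidAlgebra ℂ (Equiv.Perm (Fin N))) :
    inn (J l * x) y = inn x (J l * y) := by
  have h1 : J l * x = ∑ i ∈ Finset.univ.filter (fun i => i < l), tr i l * x := by
    rw [J, Finset.sum_mul]
  have h2 : J l * y = ∑ i ∈ Finset.univ.filter (fun i => i < l), tr i l * y := by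
    rw [J, Finset.sum_mul]
  rw [h1, h2]
  have hL : ∀ (z : MonoidAlgebra ℂ (Equiv.Perm (Fin N)))
      (s : Finset (Fin N)) (f : Fin N → MonoidAlgebra ℂ (Equiv.Perm (Fin N))),
      inn (∑ i ∈ s, f i) z = ∑ i ∈ s, inn (f i) z := by
    intro z s f
    calc inn (∑ i ∈ s, f i) z
        = ∑ g : Equiv.Perm (Fin N), ∑ i ∈ s, (starRingEnd ℂ) ((f i).coeff g) * z.coeff g := by
          rw [inn]
          apply Finset.sum_congr rfl
          intro g _
          rw [MonoidAlgebra.coeff_sum, Finsupp.finset_sum_apply, map_sum, Finset.sum_mul]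
      _ = ∑ i ∈ s, ∑ g : Equiv.Perm (Fin N), (starRingEnd ℂ) ((f i).coeff g) * z.coeff g :=
          Finset.sum_comm
      _ = ∑ i ∈ s, inn (f i) z := rfl
  have hR : ∀ (z : MonoidAlgebra ℂ (Equiv.Perm (Fin N)))
      (s : Finset (Fin N)) (f : Fin N → MonoidAlgebra ℂ (Equiv.Perm (Fin N))),
      inn z (∑ i ∈ s, f i) = ∑ i ∈ s, inn z (f i) := by
    intro z s f
    calc inn z (∑ i ∈ s, f i)
        = ∑ g : Equiv.Perm (Fin N), ∑ i ∈ s, (starRingEnd ℂ) (z.coeff g) * (f i).coeff g := by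
          rw [inn]
          apply Finset.sum_congr rfl
          intro g _
          rw [MonoidAlgebra.coeff_sum, Finsupp.finset_sum_apply, Finset.mul_sum]
      _ = ∑ i ∈ s, ∑ g : Equiv.Perm (Fin N), (starRingEnd ℂ) (z.coeff g) * (f i).coeff g :=
          Finset.sum_comm
      _ = ∑ i ∈ s, inn z (f i) := rfl
  rw [hL, hR]
  apply Finset.sum_congr rfl
  intro i _
  exact inn_tr i l x y



lemma key : ∀ (j : ℕ) (l : Fin N), (l : ℕ) = j → ∀ (a : Fin N → ℂ)
    (v : MonoidAlgebra ℂ (Equiv.Perm (Fin N))), v ≠ 0 →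
    (∀ i : Fin N, i ≤ l → J i * v = a i • v) →
    ∃ m : ℤ, a l = (m : ℂ) ∧ m.natAbs ≤ j := by
  intro j
  induction j with
  | zero =>
    intro l hl a v hv hev
    have hJ : J l = 0 := by
      rw [J]
      convert Finset.sum_empty
      ext i
      simp only [Finset.mem_filter, Finset.mem_univ, true_and, Fin.lt_def, hl,
        Finset.notMem_empty, iff_false]
      omega
    have h := hev l le_rfl
    rw [hJ, zero_mul] at h
    rcases smul_eq_zero.mp h.symm with h0 | h0
    · exact ⟨0, by rw [h0]; simp, by simp⟩
    · exact absurd h0 hv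
  | succ j ih =>
    intro l hl a v hv hev
    have hjN : j < N := lt_trans (by omega) l.isLt
    set p : Fin N := ⟨j, hjN⟩ with hp
    have hpl : p < l := by rw [Fin.lt_def]; simp [hp, hl]
    have hplv : (l : ℕ) = (p : ℕ) + 1 := by simp [hp, hl]
    obtain ⟨m₀, hm₀, hm₀abs⟩ :=
      ih p rfl a v hv (fun i hi => hev i (le_trans hi (le_of_lt hpl)))
    set s := tr p l with hs
    set u := s * v with hu
    have hss : s * s = 1 := tr_mul_self p l
    have hI2 : s * J l = J p * s + 1 := sJl p l hplv
    have hI3 : J l * s = s * J p + 1 := by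
      calc J l * s = (s * (s * (J l * s))) := by rw [← mul_assoc, ← mul_assoc, hss, one_mul]
        _ = s * ((s * J l) * s) := by rw [mul_assoc s (J l) s]
        _ = s * ((J p * s + 1) * s) := by rw [hI2]
        _ = s * (J p * (s * s) + s) := by rw [add_mul, one_mul, mul_assoc]
        _ = s * J p + 1 := by rw [hss, mul_one, mul_add, hss]
    have hJlv : J l * v = a l • v := hev l le_rfl
    have hJpv : J p * v = a p • v := hev p (le_of_lt hpl)
    have hJlu : J l * u = a p • u + v := by
      calc J l * u = (J l * s) * v := by rw [hu, mul_assoc]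
        _ = (s * J p + 1) * v := by rw [hI3]
        _ = s * (J p * v) + v := by rw [add_mul, one_mul, mul_assoc]
        _ = s * (a p • v) + v := by rw [hJpv]
        _ = a p • u + v := by rw [mul_smul_comm, ← hu]
    have hJpu : J p * u = a l • u - v := by
      have hJps : J p * s = s * J l - 1 := by rw [hI2, add_sub_cancel_right]
      calc J p * u = (J p * s) * v := by rw [hu, mul_assoc]
        _ = (s * J l - 1) * v := by rw [hJps]
        _ = s * (J l * v) - v := by rw [sub_mul, one_mul, mul_assoc]
        _ = s * (a l • v) - v := by rw [hJlv]
        _ = a l • u - v := by rw [mul_smul_comm, ← hu]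
    by_cases hdep : ∃ c : ℂ, u = c • v
    · obtain ⟨c, hc⟩ := hdep
      have hsu : s * u = v := by rw [hu, ← mul_assoc, hss, one_mul]
      have hc2 : c * c = 1 := by
        have h1 : v = (c * c) • v := by
          calc v = s * u := hsu.symm
            _ = s * (c • v) := by rw [hc]
            _ = c • (s * v) := mul_smul_comm c s v
            _ = c • u := by rw [← hu]
            _ = c • (c • v) := by rw [hc]
            _ = (c * c) • v := smul_smul c c v
        have h2 : ((c * c) - 1) • v = 0 := by rw [sub_smul, one_smul, ← h1, sub_self]
        rcases smul_eq_zero.mp h2 with h0 | h0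
        · linear_combination h0
        · exact absurd h0 hv
      have heq : c * a l = c * a p + 1 := by
        have h1 : J l * u = (c * a l) • v := by rw [hc, mul_smul_comm, hJlv, smul_smul]
        have h2 : J l * u = (c * a p + 1) • v := by
          rw [hJlu, hc, smul_smul, add_smul, one_smul, mul_comm (a p) c]
        have h3 : ((c * a l) - (c * a p + 1)) • v = 0 := by
          rw [sub_smul, ← h1, ← h2, sub_self]
        rcases smul_eq_zero.mp h3 with h0 | h0
        · linear_combination h0
        · exact absurd h0 hv
      have hc1 : c = 1 ∨ c = -1 := mul_self_eq_one_iff.mp hc2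
      rcases hc1 with rfl | rfl
      · refine ⟨m₀ + 1, ?_, by omega⟩
        push_cast
        rw [← hm₀]
        linear_combination heq
      · refine ⟨m₀ - 1, ?_, by omega⟩
        push_cast
        rw [← hm₀]
        linear_combination -heq
    · push_neg at hdep
      by_cases hba : a l = a p
      · exfalso
        have hreal : (starRingEnd ℂ) (a p) = a p := by rw [hm₀]; exact map_intCast (starRingEnd ℂ) m₀
        have hveq : v = J l * u - a p • u := by rw [hJlu, add_sub_cancel_left]
        have hzero : inn v v = 0 := by
          calc inn v v = inn (J l * u - a p • u) v := by rw [← hveq]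
            _ = inn (J l * u) v - inn (a p • u) v := inn_sub_left _ _ _
            _ = inn u (J l * v) - (starRingEnd ℂ) (a p) * inn u v := by
                rw [inn_J, inn_smul_left]
            _ = inn u (a l • v) - a p * inn u v := by rw [hJlv, hreal]
            _ = a l * inn u v - a p * inn u v := by rw [inn_smul_right]
            _ = 0 := by rw [hba]; ring
        exact inn_self_ne_zero v hv hzero
      · set d := (a l - a p)⁻¹ with hd
        have hdne : a l - a p ≠ 0 := sub_ne_zero.mpr hba
        set w := u - d • v with hw
        have hw0 : w ≠ 0 := by
          intro h
          apply hdep d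
          rw [hw, sub_eq_zero] at h
          exact h
        set a' : Fin N → ℂ := fun i => if i = p then a l else a i with ha'
        have hev' : ∀ i : Fin N, i ≤ p → J i * w = a' i • w := by
          intro i hi
          rcases eq_or_lt_of_le hi with heq | hilt
          · rw [heq]
            simp only [ha', if_pos rfl]
            have hdd : a l * d = d * a p + 1 := by
              rw [hd]
              field_simp
              ring
            have h1 : J p * w = a l • u - v - (d * a p) • v := by
              rw [hw, mul_sub, hJpu, mul_smul_comm, hJpv, smul_smul]
            calc J p * w = a l • u - v - (d * a p) • v := h1
              _ = a l • u - (d * a p + 1) • v := by rw [add_smul, one_smul]; abel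
              _ = a l • u - (a l * d) • v := by rw [← hdd]
              _ = a l • w := by rw [hw, smul_sub, smul_smul]
          · have hine : i ≠ p := ne_of_lt hilt
            simp only [ha', if_neg hine]
            have hcomm : J i * s = s * J i := J_comm_tr i p l hilt hpl
            have hJiu : J i * u = a i • u := by
              rw [hu, ← mul_assoc, hcomm, mul_assoc, hev i (le_of_lt (lt_trans hilt hpl)),
                mul_smul_comm]
            rw [hw, mul_sub, hJiu, mul_smul_comm, hev i (le_of_lt (lt_trans hilt hpl)),
              smul_smul, smul_sub, smul_smul, mul_comm d (a i)]
        obtain ⟨m, hm, hmabs⟩ := ih p rfl a' w hw0 hev'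
        refine ⟨m, ?_, by omega⟩
        rw [← hm, ha']
        simp



lemma J_eq_zero (l : Fin N) (hl : (l : ℕ) = 0) : J l = 0 := by
  rw [J]
  convert Finset.sum_empty
  ext i
  simp only [Finset.mem_filter, Finset.mem_univ, true_and, Fin.lt_def, hl,
    Finset.notMem_empty, iff_false]
  omega

noncomputable instance : Module.Finite ℂ (MonoidAlgebra ℂ (Equiv.Perm (Fin N))) :=
  Module.Finite.equiv ((MonoidAlgebra.coeffLinearEquiv ℂ).trans (Finsupp.linearEquivFunOnFinite ℂ ℂ (Equiv.Perm (Fin N)))).symm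

lemma exists_joint (L : Fin N) (μ : ℂ) :
    ∀ (k : ℕ) (v : MonoidAlgebra ℂ (Equiv.Perm (Fin N))), v ≠ 0 → J L * v = μ • v →
    ∃ w, w ≠ 0 ∧ J L * w = μ • w ∧
      ∃ a : Fin N → ℂ, ∀ i : Fin N, (i : ℕ) ≤ k → J i * w = a i • w := by
  intro k
  induction k with
  | zero =>
    intro v hv hL
    refine ⟨v, hv, hL, fun _ => 0, fun i hi => ?_⟩
    rw [J_eq_zero i (by omega), zero_mul, zero_smul]
  | succ k ih =>
    intro v hv hL
    obtain ⟨w, hw0, hwL, a, ha⟩ := ih v hv hL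
    by_cases hkN : k + 1 < N
    · set q : Fin N := ⟨k + 1, hkN⟩ with hq
      set W : Submodule ℂ (MonoidAlgebra ℂ (Equiv.Perm (Fin N))) :=
        (⨅ i : Fin N, ⨅ _ : (i : ℕ) ≤ k,
          Module.End.eigenspace (LinearMap.mulLeft ℂ (J i)) (a i)) ⊓
        Module.End.eigenspace (LinearMap.mulLeft ℂ (J L)) μ with hWdef
      have hmem : ∀ x, x ∈ W ↔
          ((∀ i : Fin N, (i : ℕ) ≤ k → J i * x = a i • x) ∧ J L * x = μ • x) := by
        intro x
        simp [hWdef, Submodule.mem_inf, Submodule.mem_iInf,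
          Module.End.mem_eigenspace_iff, LinearMap.mulLeft_apply]
      have hwW : w ∈ W := (hmem w).mpr ⟨ha, hwL⟩
      have hstab : ∀ x ∈ W, (LinearMap.mulLeft ℂ (J q)) x ∈ W := by
        intro x hx
        rw [hmem] at hx ⊢
        simp only [LinearMap.mulLeft_apply]
        constructor
        · intro i hi
          rw [← mul_assoc, J_comm i q, mul_assoc, hx.1 i hi, mul_smul_comm]
        · rw [← mul_assoc, J_comm L q, mul_assoc, hx.2, mul_smul_comm]
      have hnt : Nontrivial W :=
        ⟨⟨⟨w, hwW⟩, 0, fun hcon => hw0 (by simpa using congrArg Subtype.val hcon)⟩⟩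
      set f := (LinearMap.mulLeft ℂ (J q)).restrict hstab with hf
      obtain ⟨c, hc⟩ := Module.End.exists_eigenvalue f
      obtain ⟨x, hx⟩ := hc.exists_hasEigenvector
      have hxW : (x : MonoidAlgebra ℂ (Equiv.Perm (Fin N))) ∈ W := x.2
      rw [hmem] at hxW
      have hx0 : (x : MonoidAlgebra ℂ (Equiv.Perm (Fin N))) ≠ 0 := by
        intro hcon
        exact hx.2 (Subtype.ext hcon)
      have hxq : J q * (x : MonoidAlgebra ℂ (Equiv.Perm (Fin N))) =
          c • (x : MonoidAlgebra ℂ (Equiv.Perm (Fin N))) := by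
        have := hx.apply_eq_smul
        have h2 := congrArg Subtype.val this
        simpa [hf, LinearMap.restrict_coe_apply, LinearMap.mulLeft_apply] using h2
      refine ⟨(x : MonoidAlgebra ℂ (Equiv.Perm (Fin N))), hx0, hxW.2,
        fun i => if (i : ℕ) = k + 1 then c else a i, fun i hi => ?_⟩
      by_cases hik : (i : ℕ) = k + 1
      · have hiq : i = q := Fin.ext (by simp [hq, hik])
        have hqv : ((q : Fin N) : ℕ) = k + 1 := by simp [hq]
        simpa [hiq, hqv] using hxq
      · simpa [hik] using hxW.1 i (by omega)
    · refine ⟨w, hw0, hwL, a, fun i hi => ha i ?_⟩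
      have := i.isLt
      omega


lemma conj_X (r : ℕ) :
    tr (0 : Fin (r+1)) (Fin.last r) *
      (∑ m ∈ Finset.univ.filter (fun m : Fin (r + 1) => m ≠ 0),
        MonoidAlgebra.of ℂ (Equiv.Perm (Fin (r + 1))) (Equiv.swap 0 m)) *
      tr (0 : Fin (r+1)) (Fin.last r) = J (Fin.last r) := by
  rw [Finset.mul_sum, Finset.sum_mul, J]
  have h0L : Equiv.swap (0 : Fin (r+1)) (Fin.last r) 0 = Fin.last r := Equiv.swap_apply_left _ _
  refine Finset.sum_nbij' (i := fun m => Equiv.swap (0 : Fin (r+1)) (Fin.last r) m)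
    (j := fun m => Equiv.swap (0 : Fin (r+1)) (Fin.last r) m) ?_ ?_ ?_ ?_ ?_
  · intro m hm
    simp only [Finset.mem_filter, Finset.mem_univ, true_and] at hm ⊢
    rw [Fin.lt_last_iff_ne_last]
    intro hcon
    apply hm
    have := congrArg (Equiv.swap (0 : Fin (r+1)) (Fin.last r)) hcon
    rwa [Equiv.swap_apply_self, Equiv.swap_apply_right] at this
  · intro m hm
    simp only [Finset.mem_filter, Finset.mem_univ, true_and] at hm
    rw [Fin.lt_last_iff_ne_last] at hm
    simp only [Finset.mem_filter, Finset.mem_univ, true_and]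
    intro hcon
    apply hm
    have := congrArg (Equiv.swap (0 : Fin (r+1)) (Fin.last r)) hcon
    rwa [Equiv.swap_apply_self, Equiv.swap_apply_left] at this
  · intro m _; exact Equiv.swap_apply_self _ _ _
  · intro m _; exact Equiv.swap_apply_self _ _ _
  · intro m hm
    simp only [Finset.mem_filter, Finset.mem_univ, true_and] at hm
    rw [tr, tr, ← map_mul, ← map_mul]
    congr 1
    have key := Equiv.swap_apply_apply (Equiv.swap (0 : Fin (r+1)) (Fin.last r)) 0 m
    rw [h0L] at key
    -- key : swap (last) (swap 0 last m) = swap 0 last * swap 0 m * (swap 0 last)⁻¹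
    rw [Equiv.swap_inv] at key
    calc Equiv.swap (0 : Fin (r+1)) (Fin.last r) * Equiv.swap 0 m *
          Equiv.swap (0 : Fin (r+1)) (Fin.last r)
        = Equiv.swap (Fin.last r) (Equiv.swap (0 : Fin (r+1)) (Fin.last r) m) := key.symm
      _ = Equiv.swap (Equiv.swap (0 : Fin (r+1)) (Fin.last r) m) (Fin.last r) :=
          Equiv.swap_comm _ _

lemma isUnit_of_mul_inj (r : ℕ) (a : MonoidAlgebra ℂ (Equiv.Perm (Fin (r+1))))
    (h : ∀ x, a * x = 0 → x = 0) : IsUnit a := by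
  set la := LinearMap.mulLeft ℂ a with hla
  have hinj : Function.Injective la := by
    rw [← LinearMap.ker_eq_bot, LinearMap.ker_eq_bot']
    intro x hx
    exact h x (by simpa [hla, LinearMap.mulLeft_apply] using hx)
  have hsurj := LinearMap.injective_iff_surjective.mp hinj
  obtain ⟨b, hb⟩ := hsurj 1
  have hab : a * b = 1 := by simpa [hla, LinearMap.mulLeft_apply] using hb
  have hba : b * a = 1 := by
    have h2 : a * (b * a) = a * 1 := by rw [← mul_assoc, hab, one_mul, mul_one]
    have := hinj (a₁ := b * a) (a₂ := 1) (by simpa [hla, LinearMap.mulLeft_apply] using h2)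
    exact this
  exact ⟨⟨a, b, hab, hba⟩, rfl⟩

lemma unit_plus (lam nu : ℂ) (n r : ℕ) (hr : r + 1 ≤ n) (hn : 1 ≤ n)
    (h : ∀ p : ℕ, p ≤ n - 1 → lam + p * nu ≠ 0 ∧ lam - p * nu ≠ 0) :
    IsUnit (lam • (1 : MonoidAlgebra ℂ (Equiv.Perm (Fin (r + 1)))) +
        nu • ∑ m ∈ Finset.univ.filter (fun m : Fin (r + 1) => m ≠ 0),
          MonoidAlgebra.of ℂ (Equiv.Perm (Fin (r + 1))) (Equiv.swap 0 m)) := by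
  set X : MonoidAlgebra ℂ (Equiv.Perm (Fin (r + 1))) :=
    ∑ m ∈ Finset.univ.filter (fun m : Fin (r + 1) => m ≠ 0),
      MonoidAlgebra.of ℂ (Equiv.Perm (Fin (r + 1))) (Equiv.swap 0 m) with hX
  apply isUnit_of_mul_inj
  intro x hx
  by_contra hx0
  have hlam0 : lam ≠ 0 := by
    have := (h 0 (by omega)).1
    simpa using this
  have hexp : lam • x + nu • (X * x) = 0 := by
    calc lam • x + nu • (X * x)
        = (lam • (1 : MonoidAlgebra ℂ (Equiv.Perm (Fin (r + 1)))) + nu • X) * x := by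
          rw [add_mul, smul_mul_assoc, smul_mul_assoc, one_mul]
      _ = 0 := hx
  rcases eq_or_ne nu 0 with rfl | hnu
  · apply hx0
    have : lam • x = 0 := by simpa using hexp
    rcases smul_eq_zero.mp this with h0 | h0
    · exact absurd h0 hlam0
    · exact h0
  · set μ : ℂ := -(lam / nu) with hμ
    have hXx : X * x = μ • x := by
      have h1 : nu • (X * x) = -(lam • x) := (neg_eq_of_add_eq_zero_right hexp).symm
      have h2 : nu • (μ • x) = -(lam • x) := by
        rw [smul_smul, hμ]
        have hc : nu * -(lam / nu) = -lam := by
          rw [mul_neg, mul_comm, div_mul_cancel₀ lam hnu]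
        rw [hc, neg_smul]
      exact smul_right_injective _ hnu (h1.trans h2.symm)
    -- conjugate to the top JM element
    set L : Fin (r + 1) := Fin.last r with hL
    set t : MonoidAlgebra ℂ (Equiv.Perm (Fin (r + 1))) := tr (0 : Fin (r+1)) L with ht
    set w : MonoidAlgebra ℂ (Equiv.Perm (Fin (r + 1))) := t * x with hwdef
    have htt : t * t = 1 := tr_mul_self _ _
    have hw0 : w ≠ 0 := by
      intro hcon
      apply hx0
      have : t * w = 0 := by rw [hcon, mul_zero]
      rw [hwdef, ← mul_assoc, htt, one_mul] at this
      exact this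
    have hJw : J L * w = μ • w := by
      have hconj := conj_X r
      calc J L * w = (t * X * t) * (t * x) := by rw [hL, ← hconj, ht, hwdef]
        _ = t * X * (t * t) * x := by rw [mul_assoc, ← mul_assoc t t x, ← mul_assoc]
        _ = t * (X * x) := by rw [htt, mul_one, mul_assoc]
        _ = t * (μ • x) := by rw [hXx]
        _ = μ • w := by rw [mul_smul_comm, hwdef]
    obtain ⟨w', hw'0, hw'L, a, ha⟩ := exists_joint L μ r w hw0 hJw
    have haL : a L = μ := by
      have h1 : J L * w' = a L • w' := ha L (by simp [hL])
      have h2 : (a L - μ) • w' = 0 := by rw [sub_smul, ← h1, ← hw'L, sub_self]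
      rcases smul_eq_zero.mp h2 with h0 | h0
      · linear_combination h0
      · exact absurd h0 hw'0
    obtain ⟨m, hm, hmabs⟩ := key r L (by simp [hL]) a w' hw'0
      (fun i hi => ha i (by { have := i.isLt; omega }))
    rw [haL] at hm
    have hlin : lam + (m : ℂ) * nu = 0 := by
      rw [← hm, hμ, neg_mul, div_mul_cancel₀ lam hnu]
      ring
    have hple : m.natAbs ≤ n - 1 := by omega
    rcases Int.natAbs_eq m with hsgn | hsgn
    · apply (h m.natAbs hple).1
      rw [hsgn, Int.cast_natCast] at hlin
      exact hlin
    · apply (h m.natAbs hple).2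
      rw [hsgn, Int.cast_neg, Int.cast_natCast] at hlin
      linear_combination hlin


lemma card_ne_zero (r : ℕ) :
    (Finset.univ.filter (fun m : Fin (r + 1) => m ≠ 0)).card = r := by
  rw [Finset.filter_ne', Finset.card_erase_of_mem (Finset.mem_univ _)]
  simp

lemma eps_eval (r : ℕ) (lam nu : ℂ) :
    ((MonoidAlgebra.lift ℂ ℂ (Equiv.Perm (Fin (r+1)))) 1)
      (lam • (1 : MonoidAlgebra ℂ (Equiv.Perm (Fin (r + 1)))) +
        nu • ∑ m ∈ Finset.univ.filter (fun m : Fin (r + 1) => m ≠ 0),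
          MonoidAlgebra.of ℂ (Equiv.Perm (Fin (r + 1))) (Equiv.swap 0 m)) = lam + r * nu := by
  set ε := (MonoidAlgebra.lift ℂ ℂ (Equiv.Perm (Fin (r+1)))) 1 with hε
  rw [map_add, map_smul, map_smul, map_one, map_sum]
  have hterm : ∀ m ∈ Finset.univ.filter (fun m : Fin (r + 1) => m ≠ 0),
      ε (MonoidAlgebra.of ℂ (Equiv.Perm (Fin (r + 1))) (Equiv.swap 0 m)) = 1 := by
    intro m _
    rw [hε, MonoidAlgebra.lift_of]
    rfl
  rw [Finset.sum_congr rfl hterm, Finset.sum_const, card_ne_zero]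
  simp only [smul_eq_mul, nsmul_eq_mul, mul_one]
  ring

end JMaux


/-- For `λ, ν ∈ ℂ` and `n ≥ 1`, the elements
`λ·1 ± ν·X_r` (with `X_r = Σ_{m=2}^r σ_{1m}` the deformed Jucys–Murphy element)
are invertible in `ℂ[S_r]` for all `1 ≤ r ≤ n` if and only if `λ ± pν ≠ 0` for
all `0 ≤ p ≤ n − 1`. -/
theorem jucys_murphy_invertibility (lam nu : ℂ) (n : ℕ) (hn : 1 ≤ n) :
    (∀ r : ℕ, r + 1 ≤ n →
      IsUnit (lam • (1 : MonoidAlgebra ℂ (Equiv.Perm (Fin (r + 1)))) +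
        nu • ∑ m ∈ Finset.univ.filter (fun m : Fin (r + 1) => m ≠ 0),
          MonoidAlgebra.of ℂ (Equiv.Perm (Fin (r + 1))) (Equiv.swap 0 m)) ∧
      IsUnit (lam • (1 : MonoidAlgebra ℂ (Equiv.Perm (Fin (r + 1)))) -
        nu • ∑ m ∈ Finset.univ.filter (fun m : Fin (r + 1) => m ≠ 0),
          MonoidAlgebra.of ℂ (Equiv.Perm (Fin (r + 1))) (Equiv.swap 0 m))) ↔
    (∀ p : ℕ, p ≤ n - 1 → lam + p * nu ≠ 0 ∧ lam - p * nu ≠ 0) := by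
  constructor
  · intro H p hp
    obtain ⟨h1, h2⟩ := H p (by omega)
    constructor
    · intro hcon
      have hu := IsUnit.map ((MonoidAlgebra.lift ℂ ℂ (Equiv.Perm (Fin (p+1)))) 1) h1
      rw [JMaux.eps_eval] at hu
      exact (isUnit_iff_ne_zero.mp hu) hcon
    · intro hcon
      have heq : lam • (1 : MonoidAlgebra ℂ (Equiv.Perm (Fin (p + 1)))) -
          nu • ∑ m ∈ Finset.univ.filter (fun m : Fin (p + 1) => m ≠ 0),
            MonoidAlgebra.of ℂ (Equiv.Perm (Fin (p + 1))) (Equiv.swap 0 m) =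
          lam • (1 : MonoidAlgebra ℂ (Equiv.Perm (Fin (p + 1)))) +
          (-nu) • ∑ m ∈ Finset.univ.filter (fun m : Fin (p + 1) => m ≠ 0),
            MonoidAlgebra.of ℂ (Equiv.Perm (Fin (p + 1))) (Equiv.swap 0 m) := by
        rw [neg_smul, ← sub_eq_add_neg]
      rw [heq] at h2
      have hu := IsUnit.map ((MonoidAlgebra.lift ℂ ℂ (Equiv.Perm (Fin (p+1)))) 1) h2
      rw [JMaux.eps_eval] at hu
      apply isUnit_iff_ne_zero.mp hu
      linear_combination hcon
  · intro h r hr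
    refine ⟨JMaux.unit_plus lam nu n r hr hn h, ?_⟩
    have heq : lam • (1 : MonoidAlgebra ℂ (Equiv.Perm (Fin (r + 1)))) -
        nu • ∑ m ∈ Finset.univ.filter (fun m : Fin (r + 1) => m ≠ 0),
          MonoidAlgebra.of ℂ (Equiv.Perm (Fin (r + 1))) (Equiv.swap 0 m) =
        lam • (1 : MonoidAlgebra ℂ (Equiv.Perm (Fin (r + 1)))) +
        (-nu) • ∑ m ∈ Finset.univ.filter (fun m : Fin (r + 1) => m ≠ 0),
          MonoidAlgebra.of ℂ (Equiv.Perm (Fin (r + 1))) (Equiv.swap 0 m) := by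
      rw [neg_smul, ← sub_eq_add_neg]
    rw [heq]
    apply JMaux.unit_plus lam (-nu) n r hr hn
    intro p hp
    obtain ⟨h1, h2⟩ := h p hp
    constructor
    · intro hcon; apply h2; linear_combination hcon
    · intro hcon; apply h1; linear_combination hcon
end
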